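/- Let X be a real Banach space and Y ⊆ X a closed subspace. For every extreme point y* of the closed unit ball of Y*, there exists an extreme point x* of the closed unit ball of X* such that x* restricted to Y equals y*. -/

import Mathlib

/-!
Restriction to `Y` is a weak*-continuous linear map which, by Hahn–Banach, maps the unit ball of
`X*` onto the unit ball of `Y*`; by Banach–Alaoglu that ball is weak*-compact. The fibre of the
ball over an extreme point `y*` of the image is then a nonempty compact face of the ball, so by
Krein–Milman it has an extreme point, which is extreme in the whole ball
(`surjOn_extremePoints_image`).
-/

open Set Metric

namespace WeakDual

variable {𝕜 E F : Type*} [CommSemiring 𝕜] [TopologicalSpace 𝕜] [ContinuousAdd 𝕜]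
  [ContinuousConstSMul 𝕜 𝕜] [AddCommMonoid E] [Module 𝕜 E] [TopologicalSpace E]
  [AddCommMonoid F] [Module 𝕜 F] [TopologicalSpace F]

noncomputable def dualMap (f : E →L[𝕜] F) : WeakDual 𝕜 F →L[𝕜] WeakDual 𝕜 E where
  toFun x' := StrongDual.toWeakDual ((toStrongDual x').comp f)
  map_add' _ _ := rfl
  map_smul' _ _ := rfl
  cont := continuous_of_continuous_eval fun y => eval_continuous (f y)

theorem extremePoints_preimage_toStrongDual {𝕜 E : Type*} [CommRing 𝕜] [PartialOrder 𝕜]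
    [IsOrderedRing 𝕜] [TopologicalSpace 𝕜] [IsTopologicalRing 𝕜] [AddCommGroup E] [Module 𝕜 E]
    [TopologicalSpace E] (s : Set (StrongDual 𝕜 E)) :
    extremePoints 𝕜 (toStrongDual ⁻¹' s) = toStrongDual ⁻¹' extremePoints 𝕜 s := by
  simp only [← LinearEquiv.image_symm_eq_preimage]
  exact (image_extremePoints toStrongDual.symm s).symm

theorem image_dualMap_subtypeL_closedBall {𝕜 E : Type*} [RCLike 𝕜] [NormedAddCommGroup E]
    [NormedSpace 𝕜 E] (Y : Subspace 𝕜 E) (r : ℝ) :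
    dualMap Y.subtypeL '' (toStrongDual ⁻¹' closedBall 0 r) =
      toStrongDual ⁻¹' closedBall 0 r := by
  apply Subset.antisymm
  · rintro _ ⟨x', hx', rfl⟩
    simp only [mem_preimage, mem_closedBall_zero_iff] at hx' ⊢
    calc ‖(toStrongDual x').comp Y.subtypeL‖ ≤ ‖toStrongDual x'‖ * ‖Y.subtypeL‖ :=
          (toStrongDual x').opNorm_comp_le _
      _ ≤ r * 1 := mul_le_mul hx' Y.norm_subtypeL_le (norm_nonneg _) ((norm_nonneg _).trans hx')
      _ = r := mul_one r
  · intro y' hy'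
    obtain ⟨x', hx'Y, hx'norm⟩ := exists_extension_norm_eq Y (toStrongDual y')
    refine ⟨StrongDual.toWeakDual x', ?_, ?_⟩
    · simpa [hx'norm] using hy'
    · exact DFunLike.ext _ _ hx'Y

end WeakDual

theorem stmt_1 (X : Type*) [NormedAddCommGroup X] [NormedSpace ℝ X]
    (Y : Submodule ℝ X)
    (y' : StrongDual ℝ Y)
    (hy : y' ∈ Set.extremePoints ℝ (Metric.closedBall (0 : StrongDual ℝ Y) 1)) :
    ∃ x' : StrongDual ℝ X,
      x' ∈ Set.extremePoints ℝ (Metric.closedBall (0 : StrongDual ℝ X) 1) ∧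
      ∀ y : Y, x' (y : X) = y' y := by
  -- instance search does not see through the definition of `WeakDual` as a `WeakBilin`
  have : LocallyConvexSpace ℝ (WeakDual ℝ X) := WeakBilin.locallyConvexSpace
  have hy' : StrongDual.toWeakDual y' ∈ extremePoints ℝ
      (WeakDual.dualMap Y.subtypeL '' (WeakDual.toStrongDual ⁻¹' closedBall 0 1)) := by
    rwa [WeakDual.image_dualMap_subtypeL_closedBall, WeakDual.extremePoints_preimage_toStrongDual]
  obtain ⟨x', hx', hx'Y⟩ := surjOn_extremePoints_image
    (WeakDual.dualMap Y.subtypeL).toContinuousAffineMap (WeakDual.isCompact_closedBall 0 1) hy'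
  rw [WeakDual.extremePoints_preimage_toStrongDual] at hx'
  exact ⟨WeakDual.toStrongDual x', hx', DFunLike.congr_fun hx'Y⟩
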